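/- arXiv:1805.09586 — 3 statements merged into one kernel-verified Lean document; each statement's English description precedes it below -/
import Mathlib

section
/- Let T = T_{n₁,…,n_t} be a 2H-tree with t ≥ 2 in which n₁ = … = n_{t−2} = 0, and let Δ be the maximum degree of T. Then χ'_s(T) = Δ + 1 if and only if both u_{t−1} and u_t have degree Δ in T, i.e., if and only if n_{t−1} = n_t = Δ − 1. -/
/-- A star edge coloring of `G` with `k` colors: a proper edge coloring such that
no path or cycle of length four (four edges) is bi-colored. The walk
`a-b-x-y-z` ranges over all paths of length four (`a,b,x,y,z` distinct) and all
cycles of length four (`z = a` and `a,b,x,y` distinct). -/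
def IsStarEdgeColoring {V : Type*} (G : SimpleGraph V) {k : ℕ} (c : Sym2 V → Fin k) : Prop :=
  (∀ ⦃u v w : V⦄, G.Adj u v → G.Adj u w → v ≠ w → c s(u, v) ≠ c s(u, w)) ∧
  (∀ a b x y z : V, G.Adj a b → G.Adj b x → G.Adj x y → G.Adj y z →
    a ≠ x → a ≠ y → b ≠ y → b ≠ z → x ≠ z →
    ¬(c s(a, b) = c s(x, y) ∧ c s(b, x) = c s(y, z)))

/-- The star chromatic index of `G`: the least `k` admitting a star edge coloring. -/
noncomputable def starChromaticIndex {V : Type*} (G : SimpleGraph V) : ℕ :=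
  sInf {k : ℕ | ∃ c : Sym2 V → Fin k, IsStarEdgeColoring G c}
/-- The 2H-tree `T_{n₁,…,n_t}`: a root (`none`), its `t` neighbours `uᵢ = some ⟨i, none⟩`,
and for each `i`, `n i` further leaves `some ⟨i, some j⟩` adjacent to `uᵢ`. -/
def twoHTree (t : ℕ) (n : Fin t → ℕ) :
    SimpleGraph (Option (Σ i : Fin t, Option (Fin (n i)))) :=
  SimpleGraph.fromRel (fun x y =>
    (x = none ∧ ∃ i : Fin t, y = some ⟨i, none⟩) ∨
    (∃ (i : Fin t) (j : Fin (n i)), x = some ⟨i, none⟩ ∧ y = some ⟨i, some j⟩))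

variable {t : ℕ} {n : Fin t → ℕ} {k : ℕ}

lemma adj_none {y : Option (Σ i : Fin t, Option (Fin (n i)))} :
    (twoHTree t n).Adj none y ↔ ∃ i, y = some ⟨i, none⟩ := by
  simp [twoHTree, SimpleGraph.fromRel_adj]; aesop

lemma adj_U {i : Fin t} {y : Option (Σ i : Fin t, Option (Fin (n i)))} :
    (twoHTree t n).Adj (some ⟨i, none⟩) y ↔ y = none ∨ ∃ j, y = some ⟨i, some j⟩ := by
  simp [twoHTree, SimpleGraph.fromRel_adj]; aesop

lemma adj_L {i : Fin t} {j : Fin (n i)} {y : Option (Σ i : Fin t, Option (Fin (n i)))} :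
    (twoHTree t n).Adj (some ⟨i, some j⟩) y ↔ y = some ⟨i, none⟩ := by
  simp [twoHTree, SimpleGraph.fromRel_adj]; aesop

def pcol (d : Fin k) (rc : Fin t → Fin k) (lc : ∀ i : Fin t, Fin (n i) → Fin k) :
    Option (Σ i : Fin t, Option (Fin (n i))) → Option (Σ i : Fin t, Option (Fin (n i))) → Fin k
  | none, some ⟨i, none⟩ => rc i
  | some ⟨i, none⟩, none => rc i
  | some ⟨_, none⟩, some ⟨i, some j⟩ => lc i j
  | some ⟨i, some j⟩, some ⟨_, none⟩ => lc i j
  | _, _ => d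

lemma pcol_symm (d : Fin k) (rc : Fin t → Fin k) (lc : ∀ i : Fin t, Fin (n i) → Fin k) :
    ∀ x y, pcol d rc lc x y = pcol d rc lc y x := by
  rintro (_ | ⟨i, _ | j⟩) (_ | ⟨i', _ | j'⟩) <;> rfl

def scol (d : Fin k) (rc : Fin t → Fin k) (lc : ∀ i : Fin t, Fin (n i) → Fin k) :
    Sym2 (Option (Σ i : Fin t, Option (Fin (n i)))) → Fin k :=
  Sym2.lift ⟨pcol d rc lc, pcol_symm d rc lc⟩

@[simp] lemma scol_RU (d : Fin k) (rc : Fin t → Fin k) (lc : ∀ i : Fin t, Fin (n i) → Fin k)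
    (i : Fin t) : scol d rc lc s(none, some ⟨i, none⟩) = rc i := rfl

@[simp] lemma scol_UR (d : Fin k) (rc : Fin t → Fin k) (lc : ∀ i : Fin t, Fin (n i) → Fin k)
    (i : Fin t) : scol d rc lc s(some ⟨i, none⟩, none) = rc i := rfl

@[simp] lemma scol_UL (d : Fin k) (rc : Fin t → Fin k) (lc : ∀ i : Fin t, Fin (n i) → Fin k)
    (i i' : Fin t) (j : Fin (n i)) : scol d rc lc s(some ⟨i', none⟩, some ⟨i, some j⟩) = lc i j := rfl

@[simp] lemma scol_LU (d : Fin k) (rc : Fin t → Fin k) (lc : ∀ i : Fin t, Fin (n i) → Fin k)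
    (i i' : Fin t) (j : Fin (n i)) : scol d rc lc s(some ⟨i, some j⟩, some ⟨i', none⟩) = lc i j := rfl

lemma scol_isStar (d : Fin k) (rc : Fin t → Fin k) (lc : ∀ i : Fin t, Fin (n i) → Fin k)
    (hrc : Function.Injective rc)
    (hlc : ∀ i, Function.Injective (lc i))
    (hne : ∀ i (j : Fin (n i)), lc i j ≠ rc i)
    (hbad : ∀ (i i' : Fin t) (j : Fin (n i)) (j' : Fin (n i')), i ≠ i' →
      ¬(lc i j = rc i' ∧ lc i' j' = rc i)) :
    IsStarEdgeColoring (twoHTree t n) (scol d rc lc) := by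
  constructor
  · rintro (_ | ⟨i, _ | j⟩) v w huv huw hvw
    · rw [adj_none] at huv huw
      obtain ⟨i, rfl⟩ := huv; obtain ⟨i', rfl⟩ := huw
      simp only [scol_RU]
      intro h
      exact hvw (by rw [hrc h])
    · rw [adj_U] at huv huw
      rcases huv with rfl | ⟨j, rfl⟩ <;> rcases huw with rfl | ⟨j', rfl⟩
      · exact (hvw rfl).elim
      · simpa using (hne i j').symm
      · simpa using hne i j
      · simp only [scol_UL]
        intro h
        exact hvw (by rw [hlc i h])
    · rw [adj_L] at huv huw
      rw [huv, huw] at hvw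
      exact (hvw rfl).elim
  · rintro (_ | ⟨i, _ | j⟩) b x y z hab hbx hxy hyz hax hay hby hbz hxz
    · rw [adj_none] at hab; obtain ⟨i, rfl⟩ := hab
      rw [adj_U] at hbx
      rcases hbx with rfl | ⟨j, rfl⟩
      · exact (hax rfl).elim
      · rw [adj_L] at hxy
        exact (hby hxy.symm).elim
    · rw [adj_U] at hab
      rcases hab with rfl | ⟨j, rfl⟩
      · rw [adj_none] at hbx; obtain ⟨i', rfl⟩ := hbx
        rw [adj_U] at hxy
        rcases hxy with rfl | ⟨j', rfl⟩
        · exact (hby rfl).elim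
        · rw [adj_L] at hyz
          exact (hxz hyz.symm).elim
      · rw [adj_L] at hbx
        exact (hax hbx.symm).elim
    · rw [adj_L] at hab; obtain rfl := hab
      rw [adj_U] at hbx
      rcases hbx with rfl | ⟨j₂, rfl⟩
      · rw [adj_none] at hxy; obtain ⟨i', rfl⟩ := hxy
        rw [adj_U] at hyz
        rcases hyz with rfl | ⟨j₃, rfl⟩
        · exact (hxz rfl).elim
        · simp only [scol_LU, scol_RU, scol_UR, scol_UL]
          have hii' : i ≠ i' := fun h => hby (by rw [h])
          rintro ⟨h1, h2⟩
          exact hbad i i' j j₃ hii' ⟨h1, h2.symm⟩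
      · rw [adj_L] at hxy
        exact (hby hxy.symm).elim

lemma star_lb_t {c : Sym2 (Option (Σ i : Fin t, Option (Fin (n i)))) → Fin k}
    (hc : IsStarEdgeColoring (twoHTree t n) c) : t ≤ k := by
  have hinj : Function.Injective (fun i : Fin t => c s(none, some ⟨i, none⟩)) := by
    intro i i' h
    by_contra hne
    exact hc.1 (adj_none.mpr ⟨i, rfl⟩) (adj_none.mpr ⟨i', rfl⟩)
      (by simp [hne]) h
  simpa using Fintype.card_le_of_injective _ hinj

def gmap (c : Sym2 (Option (Σ i : Fin t, Option (Fin (n i)))) → Fin k) (i : Fin t) :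
    Option (Fin (n i)) → Fin k :=
  fun o => o.elim (c s(some ⟨i, none⟩, none)) (fun j => c s(some ⟨i, none⟩, some ⟨i, some j⟩))

lemma gmap_inj {c : Sym2 (Option (Σ i : Fin t, Option (Fin (n i)))) → Fin k}
    (hc : IsStarEdgeColoring (twoHTree t n) c) (i : Fin t) :
    Function.Injective (gmap c i) := by
  rintro (_ | j) (_ | j') h
  · rfl
  · exact absurd h (hc.1 (adj_U.mpr (Or.inl rfl)) (adj_U.mpr (Or.inr ⟨j', rfl⟩)) (by simp))
  · exact absurd h.symm (hc.1 (adj_U.mpr (Or.inl rfl)) (adj_U.mpr (Or.inr ⟨j, rfl⟩)) (by simp))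
  · by_contra hne
    exact hc.1 (adj_U.mpr (Or.inr ⟨j, rfl⟩)) (adj_U.mpr (Or.inr ⟨j', rfl⟩))
      (by simp; exact fun hjj => hne (by rw [hjj])) h

lemma star_lb_deg {c : Sym2 (Option (Σ i : Fin t, Option (Fin (n i)))) → Fin k}
    (hc : IsStarEdgeColoring (twoHTree t n) c) (i : Fin t) : n i + 1 ≤ k := by
  simpa using Fintype.card_le_of_injective _ (gmap_inj hc i)

lemma star_no_tight {c : Sym2 (Option (Σ i : Fin t, Option (Fin (n i)))) → Fin k}
    (hc : IsStarEdgeColoring (twoHTree t n) c) {i₁ i₂ : Fin t} (h12 : i₁ ≠ i₂)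
    (hk1 : n i₁ + 1 = k) (hk2 : n i₂ + 1 = k) : False := by
  have hU12 : (some ⟨i₁, none⟩ : Option (Σ i : Fin t, Option (Fin (n i)))) ≠ some ⟨i₂, none⟩ := by
    simp [h12]
  have hroot : c s(none, some ⟨i₁, none⟩) ≠ c s(none, some ⟨i₂, none⟩) :=
    hc.1 (adj_none.mpr ⟨i₁, rfl⟩) (adj_none.mpr ⟨i₂, rfl⟩) hU12
  have hsurj : ∀ (i : Fin t), n i + 1 = k → Function.Surjective (gmap c i) := by
    intro i hki
    exact ((Fintype.bijective_iff_injective_and_card _).mpr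
      ⟨gmap_inj hc i, by simpa using hki⟩).surjective
  obtain ⟨o₂, ho₂⟩ := hsurj i₂ hk2 (c s(none, some ⟨i₁, none⟩))
  obtain ⟨o₁, ho₁⟩ := hsurj i₁ hk1 (c s(none, some ⟨i₂, none⟩))
  rcases o₂ with _ | j₂
  · exact hroot (by rw [← ho₂]; exact (congrArg c (Sym2.eq_swap)).symm)
  rcases o₁ with _ | j₁
  · exact hroot.symm (by rw [← ho₁]; exact (congrArg c (Sym2.eq_swap)).symm)
  -- path L i₁ j₁ - U i₁ - none - U i₂ - L i₂ j₂
  refine hc.2 (some ⟨i₁, some j₁⟩) (some ⟨i₁, none⟩) none (some ⟨i₂, none⟩) (some ⟨i₂, some j₂⟩)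
    (adj_L.mpr rfl) (adj_U.mpr (Or.inl rfl)) (adj_none.mpr ⟨i₂, rfl⟩)
    (adj_U.mpr (Or.inr ⟨j₂, rfl⟩)) (by simp) (by simp [h12]) hU12 (by simp [h12]) (by simp) ⟨?_, ?_⟩
  · rw [Sym2.eq_swap]; exact ho₁
  · rw [Sym2.eq_swap]; exact ho₂.symm

lemma scol_isStar' (hk : 0 < k) (rv : Fin t → ℕ) (lv : ∀ i : Fin t, Fin (n i) → ℕ)
    (hrv : ∀ i, rv i < k) (hlv : ∀ i j, lv i j < k)
    (hrinj : ∀ i i', rv i = rv i' → i = i')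
    (hlinj : ∀ i (j j' : Fin (n i)), lv i j = lv i j' → j = j')
    (hne : ∀ i (j : Fin (n i)), lv i j ≠ rv i)
    (hbad : ∀ (i i' : Fin t) (j : Fin (n i)) (j' : Fin (n i')), i ≠ i' →
      ¬(lv i j = rv i' ∧ lv i' j' = rv i)) :
    ∃ c : Sym2 (Option (Σ i : Fin t, Option (Fin (n i)))) → Fin k,
      IsStarEdgeColoring (twoHTree t n) c := by
  refine ⟨scol ⟨0, hk⟩ (fun i => ⟨rv i, hrv i⟩) (fun i j => ⟨lv i j, hlv i j⟩),
    scol_isStar _ _ _ ?_ ?_ ?_ ?_⟩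
  · exact fun i i' h => hrinj i i' (congrArg Fin.val h)
  · exact fun i j j' h => hlinj i j j' (congrArg Fin.val h)
  · exact fun i j h => hne i j (congrArg Fin.val h)
  · rintro i i' j j' hii' ⟨h1, h2⟩
    exact hbad i i' j j' hii' ⟨congrArg Fin.val h1, congrArg Fin.val h2⟩

lemma construction1 (ht : 2 ≤ t) (hn : Monotone n)
    (h0 : ∀ i : Fin t, (i : ℕ) < t - 2 → n i = 0)
    (hkt : t + 1 ≤ k) (hkB : n ⟨t - 1, by omega⟩ + 2 ≤ k) :
    ∃ c : Sym2 (Option (Σ i : Fin t, Option (Fin (n i)))) → Fin k,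
      IsStarEdgeColoring (twoHTree t n) c := by
  have hiB : ∀ i : Fin t, n i ≤ n ⟨t - 1, by omega⟩ := fun i => hn (by
    simp only [Fin.le_def]; omega)
  refine scol_isStar' (by omega) (fun i => (i : ℕ))
    (fun i j => if (j : ℕ) < t - 2 then (j : ℕ) else (j : ℕ) + 2)
    ?_ ?_ ?_ ?_ ?_ ?_
  · intro i; beta_reduce; have := i.isLt; omega
  · intro i j; beta_reduce
    have := j.isLt; have := hiB i; split_ifs <;> omega
  · intro i i' h; beta_reduce at h; exact Fin.ext h
  · intro i j j' h; beta_reduce at h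
    exact Fin.ext (by split_ifs at h <;> omega)
  · intro i j h; beta_reduce at h
    by_cases hi : (i : ℕ) < t - 2
    · exact absurd j.isLt (by have := h0 i hi; omega)
    · have := i.isLt; split_ifs at h <;> omega
  · rintro i i' j j' hii' ⟨h1, h2⟩; beta_reduce at h1 h2
    have hi' : (i' : ℕ) < t - 2 := by
      have := i'.isLt; split_ifs at h1 <;> omega
    exact absurd j'.isLt (by have := h0 i' hi'; omega)

lemma construction2 (ht : 2 ≤ t) (hn : Monotone n)
    (h0 : ∀ i : Fin t, (i : ℕ) < t - 2 → n i = 0)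
    (hkt : t ≤ k) (hkB : n ⟨t - 1, by omega⟩ + 1 ≤ k) (hkA : n ⟨t - 2, by omega⟩ + 2 ≤ k) :
    ∃ c : Sym2 (Option (Σ i : Fin t, Option (Fin (n i)))) → Fin k,
      IsStarEdgeColoring (twoHTree t n) c := by
  have hiB : ∀ i : Fin t, n i ≤ n ⟨t - 1, by omega⟩ := fun i => hn (by
    simp only [Fin.le_def]; omega)
  have hiA : ∀ i : Fin t, (i : ℕ) ≠ t - 1 → n i ≤ n ⟨t - 2, by omega⟩ := fun i hi => hn (by
    have := i.isLt; simp only [Fin.le_def]; omega)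
  refine scol_isStar' (by omega) (fun i => (i : ℕ))
    (fun i j => if (i : ℕ) = t - 1 then (if (j : ℕ) < t - 1 then (j : ℕ) else (j : ℕ) + 1)
        else (if (j : ℕ) < t - 2 then (j : ℕ) else (j : ℕ) + 2))
    ?_ ?_ ?_ ?_ ?_ ?_
  · intro i; beta_reduce; have := i.isLt; omega
  · intro i j; beta_reduce
    have hj := j.isLt
    by_cases hi : (i : ℕ) = t - 1
    · have hni : n i = n ⟨t - 1, by omega⟩ := congrArg n (Fin.ext hi)
      rw [if_pos hi]; split_ifs <;> omega
    · have hni := hiA i hi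
      rw [if_neg hi]; split_ifs <;> omega
  · intro i i' h; beta_reduce at h; exact Fin.ext h
  · intro i j j' h; beta_reduce at h
    by_cases hi : (i : ℕ) = t - 1
    · rw [if_pos hi, if_pos hi] at h
      exact Fin.ext (by split_ifs at h <;> omega)
    · rw [if_neg hi, if_neg hi] at h
      exact Fin.ext (by split_ifs at h <;> omega)
  · intro i j h; beta_reduce at h
    by_cases hi : (i : ℕ) = t - 1
    · rw [if_pos hi] at h; split_ifs at h <;> omega
    · by_cases hi2 : (i : ℕ) < t - 2
      · exact absurd j.isLt (by have := h0 i hi2; omega)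
      · have := i.isLt
        rw [if_neg hi] at h; split_ifs at h <;> omega
  · rintro i i' j j' hii' ⟨h1, h2⟩; beta_reduce at h1 h2
    have hni : ¬ ((i : ℕ) < t - 2) := fun h => absurd j.isLt (by have := h0 i h; omega)
    have hni' : ¬ ((i' : ℕ) < t - 2) := fun h => absurd j'.isLt (by have := h0 i' h; omega)
    have hlt := i.isLt; have hlt' := i'.isLt
    by_cases hi : (i : ℕ) = t - 1
    · have hi' : (i' : ℕ) ≠ t - 1 := fun h => hii' (Fin.ext (by omega))
      rw [if_neg hi'] at h2; split_ifs at h2 <;> omega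
    · rw [if_neg hi] at h1; split_ifs at h1 <;> omega

/-- Theorem 6.5, equality case. Let `T = T_{n₁,…,n_t}` be a 2H-tree
with `t ≥ 2` and `n₁ = ⋯ = n_{t-2} = 0`, and let `Δ = max (t, n_t + 1)` be its maximum
degree. Then `χ'_s(T) = Δ + 1` iff both `u_{t-1}` and `u_t` have degree `Δ`, i.e. iff
`n_{t-1} + 1 = Δ` and `n_t + 1 = Δ`. -/
theorem twoHTree_two_big_branches_eq_iff (t : ℕ) (ht : 2 ≤ t) (n : Fin t → ℕ)
    (hn : Monotone n) (h0 : ∀ i : Fin t, (i : ℕ) < t - 2 → n i = 0) :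
    starChromaticIndex (twoHTree t n) = max t (n ⟨t - 1, by omega⟩ + 1) + 1 ↔
      (n ⟨t - 2, by omega⟩ + 1 = max t (n ⟨t - 1, by omega⟩ + 1) ∧
        n ⟨t - 1, by omega⟩ + 1 = max t (n ⟨t - 1, by omega⟩ + 1)) := by
  have hAB : n ⟨t - 2, by omega⟩ ≤ n ⟨t - 1, by omega⟩ := hn (Fin.mk_le_mk.mpr (by omega))
  have htΔ : t ≤ max t (n ⟨t - 1, by omega⟩ + 1) := le_max_left _ _
  have hBΔ : n ⟨t - 1, by omega⟩ + 1 ≤ max t (n ⟨t - 1, by omega⟩ + 1) := le_max_right _ _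
  have hup : ∃ c : Sym2 (Option (Σ i : Fin t, Option (Fin (n i)))) →
      Fin (max t (n ⟨t - 1, by omega⟩ + 1) + 1),
      IsStarEdgeColoring (twoHTree t n) c :=
    construction1 ht hn h0 (by omega) (by omega)
  have hlb : ∀ k : ℕ, (∃ c : Sym2 (Option (Σ i : Fin t, Option (Fin (n i)))) → Fin k,
      IsStarEdgeColoring (twoHTree t n) c) → max t (n ⟨t - 1, by omega⟩ + 1) ≤ k := by
    rintro k ⟨c, hc⟩
    have h1 := star_lb_t hc
    have h2 := star_lb_deg hc ⟨t - 1, by omega⟩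
    omega
  constructor
  · intro hEq
    by_contra hC
    have hcond : n ⟨t - 2, by omega⟩ + 2 ≤ max t (n ⟨t - 1, by omega⟩ + 1) := by
      by_cases hq : n ⟨t - 2, by omega⟩ + 1 = max t (n ⟨t - 1, by omega⟩ + 1)
      · exact absurd ⟨hq, by omega⟩ hC
      · omega
    have hΔmem : ∃ c : Sym2 (Option (Σ i : Fin t, Option (Fin (n i)))) →
        Fin (max t (n ⟨t - 1, by omega⟩ + 1)),
        IsStarEdgeColoring (twoHTree t n) c :=
      construction2 ht hn h0 htΔ hBΔ hcond
    have hle : starChromaticIndex (twoHTree t n) ≤ max t (n ⟨t - 1, by omega⟩ + 1) := by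
      unfold starChromaticIndex
      exact Nat.sInf_le hΔmem
    omega
  · rintro ⟨hAeq, hBeq⟩
    unfold starChromaticIndex
    refine le_antisymm (Nat.sInf_le hup) (le_csInf ⟨_, hup⟩ ?_)
    rintro k hk
    have hge := hlb k hk
    by_cases hkΔ : k = max t (n ⟨t - 1, by omega⟩ + 1)
    case neg => omega
    exfalso
    rw [hkΔ] at hk
    obtain ⟨c, hc⟩ := hk
    exact star_no_tight hc (i₁ := ⟨t - 2, by omega⟩) (i₂ := ⟨t - 1, by omega⟩)
      (by simp only [Ne, Fin.mk.injEq]; omega)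
      (by omega) (by omega)
end

section
/- Let Δ ≥ 2 and let T be the 2H-tree T_{n₁,…,n_t} with t = Δ, n₁ = … = n_{t−2} = 0, n_{t−1} = Δ − 2, and n_t = Δ − 1 (so T has maximum degree Δ). Then χ'_s(T) = Δ. -/
open Function

theorem IsStarEdgeColoring.card_le_of_adj {V : Type*} {G : SimpleGraph V} {k : ℕ}
    {c : Sym2 V → Fin k} (hc : IsStarEdgeColoring G c) {ι : Type*} [Fintype ι] {v : V}
    {f : ι → V} (hf : Injective f) (hadj : ∀ i, G.Adj v (f i)) : Fintype.card ι ≤ k := by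
  have hinj : Injective fun i => c s(v, f i) := fun i i' he =>
    by_contra fun hne => hc.1 (hadj i) (hadj i') (hf.ne hne) he
  simpa using Fintype.card_le_of_injective _ hinj

theorem starChromaticIndex_eq_of_isStarEdgeColoring {V : Type*} {G : SimpleGraph V} {k : ℕ}
    {c : Sym2 V → Fin k} (hc : IsStarEdgeColoring G c) {v : V} {f : Fin k → V}
    (hf : Injective f) (hadj : ∀ i, G.Adj v (f i)) : starChromaticIndex G = k := by
  have hk : k ∈ {k : ℕ | ∃ c : Sym2 V → Fin k, IsStarEdgeColoring G c} := ⟨c, hc⟩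
  refine le_antisymm (Nat.sInf_le hk) (le_csInf ⟨k, hk⟩ ?_)
  rintro m ⟨c', hc'⟩
  simpa using hc'.card_le_of_adj hf hadj

section TwoHTree

variable {t : ℕ} {n : Fin t → ℕ}

theorem twoHTree_adj_none_iff {q : Option (Σ i : Fin t, Option (Fin (n i)))} :
    (twoHTree t n).Adj none q ↔ ∃ i, q = some ⟨i, none⟩ := by
  simp only [twoHTree, SimpleGraph.fromRel_adj]
  aesop

theorem twoHTree_adj_inner_iff {i : Fin t} {q : Option (Σ i : Fin t, Option (Fin (n i)))} :
    (twoHTree t n).Adj (some ⟨i, none⟩) q ↔ q = none ∨ ∃ j, q = some ⟨i, some j⟩ := by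
  simp only [twoHTree, SimpleGraph.fromRel_adj]
  aesop

theorem twoHTree_adj_leaf_iff {i : Fin t} {j : Fin (n i)}
    {q : Option (Σ i : Fin t, Option (Fin (n i)))} :
    (twoHTree t n).Adj (some ⟨i, some j⟩) q ↔ q = some ⟨i, none⟩ := by
  simp only [twoHTree, SimpleGraph.fromRel_adj]
  aesop

variable [NeZero t] (hn : ∀ i, n i ≤ i)

def twoHTreeEdgeColor : Option (Σ i : Fin t, Option (Fin (n i))) →
    Option (Σ i : Fin t, Option (Fin (n i))) → Fin t
  | none, some ⟨i, none⟩ | some ⟨i, none⟩, none => i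
  | some ⟨_, none⟩, some ⟨k, some j⟩ | some ⟨k, some j⟩, some ⟨_, none⟩ =>
    Fin.castLE ((hn k).trans k.2.le) j
  | _, _ => 0

def twoHTreeColoring : Sym2 (Option (Σ i : Fin t, Option (Fin (n i)))) → Fin t :=
  Sym2.lift ⟨twoHTreeEdgeColor hn, fun x y => by
    rcases x with _ | ⟨i, _ | j⟩ <;> rcases y with _ | ⟨i', _ | j'⟩ <;> rfl⟩

@[simp] theorem twoHTreeColoring_none_inner (i : Fin t) :
    twoHTreeColoring hn s(none, some ⟨i, none⟩) = i := rfl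

@[simp] theorem twoHTreeColoring_inner_leaf (i : Fin t) (j : Fin (n i)) :
    (twoHTreeColoring hn s(some ⟨i, none⟩, some ⟨i, some j⟩) : ℕ) = j := rfl

theorem twoHTreeColoring_inner_leaf_lt (i : Fin t) (j : Fin (n i)) :
    twoHTreeColoring hn s(some ⟨i, none⟩, some ⟨i, some j⟩) < i :=
  Fin.lt_def.2 (by simpa using j.2.trans_le (hn i))

theorem twoHTreeColoring_ne {u v w : Option (Σ i : Fin t, Option (Fin (n i)))}
    (huv : (twoHTree t n).Adj u v) (huw : (twoHTree t n).Adj u w) (hvw : v ≠ w) :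
    twoHTreeColoring hn s(u, v) ≠ twoHTreeColoring hn s(u, w) := by
  rcases u with _ | ⟨i, _ | j⟩
  · obtain ⟨iv, rfl⟩ := twoHTree_adj_none_iff.1 huv
    obtain ⟨iw, rfl⟩ := twoHTree_adj_none_iff.1 huw
    rw [twoHTreeColoring_none_inner, twoHTreeColoring_none_inner]
    rintro rfl
    exact hvw rfl
  · rcases twoHTree_adj_inner_iff.1 huv with rfl | ⟨jv, rfl⟩ <;>
      rcases twoHTree_adj_inner_iff.1 huw with rfl | ⟨jw, rfl⟩
    · exact absurd rfl hvw
    · rw [Sym2.eq_swap]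
      exact (twoHTreeColoring_inner_leaf_lt hn i jw).ne'
    · rw [Sym2.eq_swap (a := some _) (b := none)]
      exact (twoHTreeColoring_inner_leaf_lt hn i jv).ne
    · rw [Ne, Fin.ext_iff, twoHTreeColoring_inner_leaf, twoHTreeColoring_inner_leaf]
      simpa [Fin.val_inj] using hvw
  · rw [twoHTree_adj_leaf_iff] at huv huw
    exact absurd (huv.trans huw.symm) hvw

theorem twoHTreeColoring_not_bicolored {a b x y z : Option (Σ i : Fin t, Option (Fin (n i)))}
    (hab : (twoHTree t n).Adj a b) (hbx : (twoHTree t n).Adj b x) (hxy : (twoHTree t n).Adj x y)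
    (hyz : (twoHTree t n).Adj y z) (hax : a ≠ x) (hby : b ≠ y) (hxz : x ≠ z) :
    ¬(twoHTreeColoring hn s(a, b) = twoHTreeColoring hn s(x, y) ∧
      twoHTreeColoring hn s(b, x) = twoHTreeColoring hn s(y, z)) := by
  rintro ⟨h₁, h₂⟩
  rcases x with _ | ⟨i, _ | j⟩
  · obtain ⟨ib, rfl⟩ := twoHTree_adj_none_iff.1 hbx.symm
    obtain ⟨iy, rfl⟩ := twoHTree_adj_none_iff.1 hxy
    obtain rfl | ⟨ja, rfl⟩ := twoHTree_adj_inner_iff.1 hab.symm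
    · exact hax rfl
    obtain rfl | ⟨jz, rfl⟩ := twoHTree_adj_inner_iff.1 hyz
    · exact hxz rfl
    rw [Sym2.eq_swap, twoHTreeColoring_none_inner] at h₁ h₂
    exact lt_asymm (h₁ ▸ twoHTreeColoring_inner_leaf_lt hn ib ja)
      (h₂ ▸ twoHTreeColoring_inner_leaf_lt hn iy jz)
  · obtain rfl | ⟨jb, rfl⟩ := twoHTree_adj_inner_iff.1 hbx.symm
    · obtain rfl | ⟨jy, rfl⟩ := twoHTree_adj_inner_iff.1 hxy
      · exact hby rfl
      · exact hxz (twoHTree_adj_leaf_iff.1 hyz).symm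
    · exact hax (twoHTree_adj_leaf_iff.1 hab.symm)
  · exact hby ((twoHTree_adj_leaf_iff.1 hbx.symm).trans (twoHTree_adj_leaf_iff.1 hxy).symm)

theorem twoHTree_isStarEdgeColoring :
    IsStarEdgeColoring (twoHTree t n) (twoHTreeColoring hn) :=
  ⟨fun _ _ _ => twoHTreeColoring_ne hn,
    fun _ _ _ _ _ hab hbx hxy hyz hax _ hby _ hxz =>
      twoHTreeColoring_not_bicolored hn hab hbx hxy hyz hax hby hxz⟩

end TwoHTree

/-- claim in the proof of Theorem 6.5. For `Δ ≥ 2`, the 2H-tree with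
`t = Δ`, `n₁ = ⋯ = n_{Δ-2} = 0`, `n_{Δ-1} = Δ - 2`, and `n_Δ = Δ - 1` (which has maximum
degree `Δ`) has star chromatic index exactly `Δ`. -/
theorem twoHTree_special_star_eq_maxDegree (Δ : ℕ) (hΔ : 2 ≤ Δ) :
    starChromaticIndex (twoHTree Δ (fun i : Fin Δ =>
      if (i : ℕ) = Δ - 1 then Δ - 1 else if (i : ℕ) = Δ - 2 then Δ - 2 else 0)) = Δ := by
  have : NeZero Δ := ⟨by omega⟩
  refine starChromaticIndex_eq_of_isStarEdgeColoring (twoHTree_isStarEdgeColoring fun i => ?_)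
    (f := fun i => some ⟨i, none⟩) (fun _ _ h => (Sigma.mk.inj_iff.1 (Option.some.inj h)).1)
    (fun i => twoHTree_adj_none_iff.2 ⟨i, rfl⟩)
  split_ifs <;> omega
end

section
/- If T is a caterpillar with maximum degree Δ ≥ 1, then Δ ≤ χ'_s(T) ≤ Δ + 1. -/
/-- A caterpillar: a tree in which removing all the leaves (vertices of degree at most
one) produces a path (possibly empty). -/
def IsCaterpillar {V : Type*} [Fintype V] (T : SimpleGraph V) [DecidableRel T.Adj] : Prop :=
  T.IsTree ∧ ∃ m : ℕ,
    Nonempty ((T.induce {v : V | 1 < T.degree v}) ≃g SimpleGraph.pathGraph m)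

/-- Injection helper: injections between finsets of compatible cardinalities. -/
lemma exists_injOn_finset {α β : Type*} [Nonempty β] (s : Finset α) (t : Finset β)
    (h : s.card ≤ t.card) :
    ∃ f : α → β, Set.InjOn f ↑s ∧ ∀ a ∈ s, f a ∈ t := by
  classical
  let emb : {x // x ∈ s} → {x // x ∈ t} := fun a => t.equivFin.symm (Fin.castLE h (s.equivFin a))
  have hinj : Function.Injective emb := by
    intro a b hab
    have h1 := t.equivFin.symm.injective hab
    have h2 := Fin.castLE_injective h h1
    exact s.equivFin.injective h2
  refine ⟨fun a => if ha : a ∈ s then (emb ⟨a, ha⟩ : β) else Classical.arbitrary β, ?_, ?_⟩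
  · intro a ha b hb hfab
    simp only [Finset.mem_coe] at ha hb
    simp only [dif_pos ha, dif_pos hb] at hfab
    have : emb ⟨a, ha⟩ = emb ⟨b, hb⟩ := Subtype.ext hfab
    exact congrArg Subtype.val (hinj this)
  · intro a ha
    simp only [dif_pos ha]
    exact (emb ⟨a, ha⟩).2

/-- A vertex with two distinct neighbors has degree at least two. -/
lemma two_nbrs_one_lt_degree {V : Type*} [Fintype V] (T : SimpleGraph V)
    [DecidableRel T.Adj] {u v w : V} (h1 : T.Adj u v) (h2 : T.Adj u w) (h3 : v ≠ w) :
    1 < T.degree u := by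
  have : 1 < (T.neighborFinset u).card :=
    Finset.one_lt_card.mpr ⟨v, by simp [h1], w, by simp [h2], h3⟩
  exact this

open SimpleGraph in
/-- The main construction: a caterpillar with max degree at least 2 admits a star edge
coloring with `Δ + 1` colors. -/
lemma caterpillar_star_coloring {V : Type*} [Fintype V] (T : SimpleGraph V)
    [DecidableRel T.Adj] (htree : T.IsTree) {m : ℕ}
    (φ : (T.induce {v : V | 1 < T.degree v}) ≃g SimpleGraph.pathGraph m)
    (hΔ2 : 2 ≤ T.maxDegree) :
    ∃ c : Sym2 V → Fin (T.maxDegree + 1), IsStarEdgeColoring T c := by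
  classical
  set Δ := T.maxDegree with hΔdef
  have h3 : 3 ≤ Δ + 1 := by omega
  -- the color maker
  set mk : ℕ → Fin (Δ + 1) := fun j => ⟨j % 3, lt_of_lt_of_le (Nat.mod_lt _ (by omega)) h3⟩
    with hmkdef
  have hmk_ne : ∀ p q : ℕ, p < q → q ≤ p + 2 → mk p ≠ mk q := by
    intro p q h1 h2 he
    have : p % 3 = q % 3 := congrArg Fin.val he
    omega
  -- the spine index
  set idx : V → ℕ := fun v => if h : 1 < T.degree v then ((φ ⟨v, h⟩ : Fin m) : ℕ) else 0
    with hidxdef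
  have hidx_lt : ∀ v, 1 < T.degree v → idx v < m := by
    intro v h
    simp only [hidxdef, dif_pos h]
    exact (φ ⟨v, h⟩).isLt
  have hadj_iff : ∀ u v, (hu : 1 < T.degree u) → (hv : 1 < T.degree v) →
      (T.Adj u v ↔ (idx u + 1 = idx v ∨ idx v + 1 = idx u)) := by
    intro u v hu hv
    have h1 : T.Adj u v ↔ (T.induce {v : V | 1 < T.degree v}).Adj ⟨u, hu⟩ ⟨v, hv⟩ := by
      simp [SimpleGraph.comap_adj]
    rw [h1, ← φ.map_adj_iff, SimpleGraph.pathGraph_adj]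
    simp only [hidxdef, dif_pos hu, dif_pos hv]
  have hinj : ∀ u v, 1 < T.degree u → 1 < T.degree v → idx u = idx v → u = v := by
    intro u v hu hv he
    simp only [hidxdef, dif_pos hu, dif_pos hv] at he
    have := φ.injective (Fin.val_injective he)
    exact congrArg Subtype.val this
  have hsp : ∀ j : ℕ, j < m → ∃ u, 1 < T.degree u ∧ idx u = j := by
    intro j hj
    have h2 : 1 < T.degree (φ.symm ⟨j, hj⟩).val := (φ.symm ⟨j, hj⟩).2
    refine ⟨(φ.symm ⟨j, hj⟩).val, h2, ?_⟩
    simp only [hidxdef, dif_pos h2]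
    have heq : (⟨(φ.symm ⟨j, hj⟩).val, h2⟩ : {v : V | 1 < T.degree v}) = φ.symm ⟨j, hj⟩ :=
      Subtype.ext rfl
    rw [heq, φ.apply_symm_apply]
  -- leaves and allowed colors
  set spineF : Finset V := Finset.univ.filter (fun v => 1 < T.degree v) with hspineF
  set leaves : V → Finset V := fun v => T.neighborFinset v \ spineF with hleaves
  set Fv : V → Finset (Fin (Δ + 1)) := fun v =>
    (({idx v - 1, idx v, idx v + 1} : Finset ℕ).filter (fun j => j + 2 ≤ m)).image mk
    with hFvdef
  set allowed : V → Finset (Fin (Δ + 1)) := fun v => Finset.univ \ Fv v with hallowed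
  have hmem_Fv : ∀ (v : V) (j : ℕ), (j = idx v - 1 ∨ j = idx v ∨ j = idx v + 1) → j + 2 ≤ m →
      mk j ∈ Fv v := by
    intro v j hj hjm
    simp only [hFvdef]
    refine Finset.mem_image.mpr ⟨j, ?_, rfl⟩
    simp only [Finset.mem_filter, Finset.mem_insert, Finset.mem_singleton]
    tauto
  -- cardinality bound
  have hcard : ∀ v, 1 < T.degree v → (leaves v).card ≤ (allowed v).card := by
    intro v hv
    have hdeg : T.degree v ≤ Δ := T.degree_le_maxDegree v
    have hiv : idx v < m := hidx_lt v hv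
    have hsum : (T.neighborFinset v ∩ spineF).card + (leaves v).card = T.degree v := by
      simp only [hleaves]
      exact Finset.card_inter_add_card_sdiff _ _
    have hFle : (Fv v).card ≤ Δ + 1 := by
      have := Finset.card_le_univ (Fv v)
      simpa using this
    have hac : (allowed v).card + (Fv v).card = Δ + 1 := by
      simp only [hallowed]
      rw [Finset.card_sdiff_of_subset (Finset.subset_univ _), Finset.card_univ, Fintype.card_fin]
      omega
    have hspnbr : ∀ j : ℕ, j < m → (idx v + 1 = j ∨ j + 1 = idx v) →
        ∃ u, u ∈ T.neighborFinset v ∩ spineF ∧ idx u = j := by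
      intro j hj hadjj
      obtain ⟨u, hu, hju⟩ := hsp j hj
      refine ⟨u, ?_, hju⟩
      have hadjvu : T.Adj v u := (hadj_iff v u hv hu).mpr (by omega)
      simp only [Finset.mem_inter, SimpleGraph.mem_neighborFinset, hspineF,
        Finset.mem_filter, Finset.mem_univ, true_and]
      exact ⟨hadjvu, hu⟩
    have hFim : (Fv v).card ≤
        (({idx v - 1, idx v, idx v + 1} : Finset ℕ).filter (fun j => j + 2 ≤ m)).card := by
      simp only [hFvdef]
      exact Finset.card_image_le
    by_cases hfwd : idx v + 2 ≤ m
    · -- forward spine neighbor exists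
      obtain ⟨u2, hu2, hju2⟩ := hspnbr (idx v + 1) (by omega) (by omega)
      by_cases hbwd : 1 ≤ idx v
      · -- interior vertex
        obtain ⟨u1, hu1, hju1⟩ := hspnbr (idx v - 1) (by omega) (by omega)
        have hne : u1 ≠ u2 := by
          intro he
          rw [he] at hju1
          omega
        have ht2 : 1 < (T.neighborFinset v ∩ spineF).card :=
          Finset.one_lt_card.mpr ⟨u1, hu1, u2, hu2, hne⟩
        have hF3 : (Fv v).card ≤ 3 := by
          refine hFim.trans ?_
          refine (Finset.card_filter_le _ _).trans ?_
          refine (Finset.card_insert_le _ _).trans ?_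
          have := Finset.card_insert_le (idx v) ({idx v + 1} : Finset ℕ)
          simp only [Finset.card_singleton] at this ⊢
          omega
        omega
      · -- left endpoint
        have ht1 : 0 < (T.neighborFinset v ∩ spineF).card :=
          Finset.card_pos.mpr ⟨u2, hu2⟩
        have hF2 : (Fv v).card ≤ 2 := by
          refine hFim.trans ?_
          have hsub : (({idx v - 1, idx v, idx v + 1} : Finset ℕ).filter (fun j => j + 2 ≤ m))
              ⊆ ({0, 1} : Finset ℕ) := by
            intro j hj
            simp only [Finset.mem_filter, Finset.mem_insert, Finset.mem_singleton] at hj ⊢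
            omega
          refine (Finset.card_le_card hsub).trans ?_
          have := Finset.card_insert_le (0 : ℕ) ({1} : Finset ℕ)
          simp only [Finset.card_singleton] at this
          omega
        omega
    · by_cases hbwd : 1 ≤ idx v
      · -- right endpoint
        obtain ⟨u1, hu1, hju1⟩ := hspnbr (idx v - 1) (by omega) (by omega)
        have ht1 : 0 < (T.neighborFinset v ∩ spineF).card :=
          Finset.card_pos.mpr ⟨u1, hu1⟩
        have hF1 : (Fv v).card ≤ 1 := by
          refine hFim.trans ?_
          have hsub : (({idx v - 1, idx v, idx v + 1} : Finset ℕ).filter (fun j => j + 2 ≤ m))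
              ⊆ ({idx v - 1} : Finset ℕ) := by
            intro j hj
            simp only [Finset.mem_filter, Finset.mem_insert, Finset.mem_singleton] at hj ⊢
            omega
          refine (Finset.card_le_card hsub).trans ?_
          simp
        omega
      · -- isolated spine vertex (m = 1)
        have hF0 : (Fv v).card ≤ 0 := by
          refine hFim.trans ?_
          have hsub : (({idx v - 1, idx v, idx v + 1} : Finset ℕ).filter (fun j => j + 2 ≤ m))
              ⊆ (∅ : Finset ℕ) := by
            intro j hj
            simp only [Finset.mem_filter, Finset.mem_insert, Finset.mem_singleton] at hj
            omega
          refine (Finset.card_le_card hsub).trans ?_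
          simp
        omega
  -- choose the leaf colorings
  have hfex : ∀ v : V, ∃ g : V → Fin (Δ + 1),
      1 < T.degree v → (Set.InjOn g ↑(leaves v) ∧ ∀ a ∈ leaves v, g a ∈ allowed v) := by
    intro v
    by_cases hv : 1 < T.degree v
    · obtain ⟨g, h1, h2⟩ := exists_injOn_finset (leaves v) (allowed v) (hcard v hv)
      exact ⟨g, fun _ => ⟨h1, h2⟩⟩
    · exact ⟨fun _ => 0, fun h => absurd h hv⟩
  choose f hf using hfex
  -- the global coloring
  set g : V → V → Fin (Δ + 1) := fun u v =>
    if hu : 1 < T.degree u then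
      (if hv : 1 < T.degree v then mk (min (idx u) (idx v)) else f u v)
    else (if hv : 1 < T.degree v then f v u else 0) with hgdef
  have hgsymm : ∀ u v, g u v = g v u := by
    intro u v
    simp only [hgdef]
    split_ifs <;> first | rfl | rw [Nat.min_comm]
  set c : Sym2 V → Fin (Δ + 1) := Sym2.lift ⟨g, hgsymm⟩ with hcdef
  have hc : ∀ u v, c s(u, v) = g u v := fun u v => Sym2.lift_mk _ u v
  have hswap : ∀ u v : V, c s(u, v) = c s(v, u) := by
    intro u v
    rw [Sym2.eq_swap]
  have hcol_ss : ∀ u v, (hu : 1 < T.degree u) → (hv : 1 < T.degree v) →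
      c s(u, v) = mk (min (idx u) (idx v)) := by
    intro u v hu hv
    rw [hc]
    simp only [hgdef, dif_pos hu, dif_pos hv]
  have hcol_sl : ∀ u v, 1 < T.degree u → ¬(1 < T.degree v) → c s(u, v) = f u v := by
    intro u v hu hv
    rw [hc]
    simp only [hgdef, dif_pos hu, dif_neg hv]
  have hleaf_mem : ∀ u v, ¬(1 < T.degree v) → T.Adj u v → v ∈ leaves u := by
    intro u v hv hadj
    simp only [hleaves, Finset.mem_sdiff, SimpleGraph.mem_neighborFinset, hspineF,
      Finset.mem_filter, Finset.mem_univ, true_and]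
    exact ⟨hadj, hv⟩
  have hleafcol : ∀ u v, (hu : 1 < T.degree u) → ¬(1 < T.degree v) → T.Adj u v →
      c s(u, v) ∉ Fv u := by
    intro u v hu hv hadj
    rw [hcol_sl u v hu hv]
    have := (hf u hu).2 v (hleaf_mem u v hv hadj)
    simp only [hallowed, Finset.mem_sdiff] at this
    exact this.2
  refine ⟨c, ?_, ?_⟩
  · -- properness
    intro u v w huv huw hvw
    have hu : 1 < T.degree u := two_nbrs_one_lt_degree T huv huw hvw
    by_cases hv : 1 < T.degree v <;> by_cases hw : 1 < T.degree w
    · -- both spine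
      rw [hcol_ss u v hu hv, hcol_ss u w hu hw]
      have h1 := (hadj_iff u v hu hv).mp huv
      have h2 := (hadj_iff u w hu hw).mp huw
      have hne : idx v ≠ idx w := fun he => hvw (hinj v w hv hw he)
      rcases h1 with h1 | h1 <;> rcases h2 with h2 | h2
      · exact absurd (by omega : idx v = idx w) hne
      · have e1 : min (idx u) (idx v) = idx u := by omega
        have e2 : min (idx u) (idx w) = idx w := by omega
        rw [e1, e2]
        exact (hmk_ne _ _ (by omega) (by omega)).symm
      · have e1 : min (idx u) (idx v) = idx v := by omega
        have e2 : min (idx u) (idx w) = idx u := by omega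
        rw [e1, e2]
        exact hmk_ne _ _ (by omega) (by omega)
      · exact absurd (by omega : idx v = idx w) hne
    · -- v spine, w leaf
      intro he
      apply hleafcol u w hu hw huw
      rw [← he, hcol_ss u v hu hv]
      have h1 := (hadj_iff u v hu hv).mp huv
      have hiu : idx u < m := hidx_lt u hu
      have hivm : idx v < m := hidx_lt v hv
      exact hmem_Fv u _ (by omega) (by omega)
    · -- v leaf, w spine
      intro he
      apply hleafcol u v hu hv huv
      rw [he, hcol_ss u w hu hw]
      have h1 := (hadj_iff u w hu hw).mp huw
      have hiu : idx u < m := hidx_lt u hu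
      have hiwm : idx w < m := hidx_lt w hw
      exact hmem_Fv u _ (by omega) (by omega)
    · -- both leaves
      rw [hcol_sl u v hu hv, hcol_sl u w hu hw]
      intro he
      exact hvw ((hf u hu).1 (Finset.mem_coe.mpr (hleaf_mem u v hv huv))
        (Finset.mem_coe.mpr (hleaf_mem u w hw huw)) he)
  · -- star condition
    intro a b x y z hab hbx hxy hyz hax hay hby hbz hxz
    rintro ⟨h1, h2⟩
    by_cases hza : z = a
    · -- a 4-cycle: impossible in a tree
      subst hza
      obtain ⟨p, _, hun⟩ := htree.existsUnique_path z x
      have e := (hun (SimpleGraph.Walk.cons hab (SimpleGraph.Walk.cons hbx .nil))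
          (by simp [SimpleGraph.Walk.isPath_def, hab.ne, hax, hbx.ne])).trans
        (hun (SimpleGraph.Walk.cons hyz.symm (SimpleGraph.Walk.cons hxy.symm .nil))
          (by simp [SimpleGraph.Walk.isPath_def, hay, hax, hxy.ne'])).symm
      have hsup := congrArg SimpleGraph.Walk.support e
      simp only [SimpleGraph.Walk.support_cons, SimpleGraph.Walk.support_nil,
        List.cons.injEq] at hsup
      exact hby hsup.2.1
    · have hb : 1 < T.degree b := two_nbrs_one_lt_degree T hab.symm hbx hax
      have hx : 1 < T.degree x := two_nbrs_one_lt_degree T hbx.symm hxy hby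
      have hy : 1 < T.degree y := two_nbrs_one_lt_degree T hxy.symm hyz hxz
      have hB := (hadj_iff b x hb hx).mp hbx
      have hY := (hadj_iff x y hx hy).mp hxy
      have hbyidx : idx b ≠ idx y := fun h => hby (hinj b y hb hy h)
      have hibm : idx b < m := hidx_lt b hb
      have hixm : idx x < m := hidx_lt x hx
      have hiym : idx y < m := hidx_lt y hy
      rcases hB with hB | hB <;> rcases hY with hY | hY
      · -- b before x, y after x : use h1
        have hcxy : c s(x, y) = mk (idx x) := by
          rw [hcol_ss x y hx hy]
          congr 1
          omega
        by_cases ha : 1 < T.degree a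
        · have hAa := (hadj_iff a b ha hb).mp hab
          have hane : idx a ≠ idx x := fun h => hax (hinj a x ha hx h)
          have haa : idx a + 1 = idx b := by omega
          have hcab : c s(a, b) = mk (idx a) := by
            rw [hcol_ss a b ha hb]
            congr 1
            omega
          rw [hcab, hcxy] at h1
          exact hmk_ne (idx a) (idx x) (by omega) (by omega) h1
        · have hnot : c s(b, a) ∉ Fv b := hleafcol b a hb ha hab.symm
          apply hnot
          rw [← hswap a b, h1, hcxy]
          exact hmem_Fv b (idx x) (by omega) (by omega)
      · exact absurd (by omega : idx b = idx y) hbyidx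
      · exact absurd (by omega : idx b = idx y) hbyidx
      · -- b after x, y before x : use h2
        have hcbx : c s(b, x) = mk (idx x) := by
          rw [hcol_ss b x hb hx]
          congr 1
          omega
        by_cases hz : 1 < T.degree z
        · have hAz := (hadj_iff y z hy hz).mp hyz
          have hzne : idx z ≠ idx x := fun h => hxz ((hinj z x hz hx h).symm)
          have hzz : idx z + 1 = idx y := by omega
          have hcyz : c s(y, z) = mk (idx z) := by
            rw [hcol_ss y z hy hz]
            congr 1
            omega
          rw [hcbx, hcyz] at h2
          exact hmk_ne (idx z) (idx x) (by omega) (by omega) h2.symm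
        · have hnot : c s(y, z) ∉ Fv y := hleafcol y z hy hz hyz
          apply hnot
          rw [h2] at hcbx
          rw [hcbx]
          exact hmem_Fv y (idx x) (by omega) (by omega)

/-- Theorem 6.7, bounds. If `T` is a caterpillar with maximum degree
`Δ ≥ 1`, then `Δ ≤ χ'_s(T) ≤ Δ + 1`. -/
theorem caterpillar_star_bounds {V : Type*} [Fintype V] (T : SimpleGraph V)
    [DecidableRel T.Adj] (hT : IsCaterpillar T) (hΔ : 1 ≤ T.maxDegree) :
    T.maxDegree ≤ starChromaticIndex T ∧ starChromaticIndex T ≤ T.maxDegree + 1 := by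
  classical
  obtain ⟨htree, m, ⟨φ⟩⟩ := hT
  have hupper : ∃ c : Sym2 V → Fin (T.maxDegree + 1), IsStarEdgeColoring T c := by
    by_cases h2 : 2 ≤ T.maxDegree
    · exact caterpillar_star_coloring T htree φ h2
    · refine ⟨fun _ => 0, ?_, ?_⟩
      · intro u v w huv huw hvw
        exfalso
        have hd := two_nbrs_one_lt_degree T huv huw hvw
        have := T.degree_le_maxDegree u
        omega
      · intro a b x y z hab hbx _ _ hax _ _ _ _ _
        have hd := two_nbrs_one_lt_degree T hab.symm hbx hax
        have := T.degree_le_maxDegree b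
        omega
  have hmem : (T.maxDegree + 1) ∈ {k : ℕ | ∃ c : Sym2 V → Fin k, IsStarEdgeColoring T c} :=
    hupper
  have hnonempty : {k : ℕ | ∃ c : Sym2 V → Fin k, IsStarEdgeColoring T c}.Nonempty :=
    ⟨_, hmem⟩
  constructor
  · have hk := Nat.sInf_mem hnonempty
    obtain ⟨c, hcp, _⟩ := hk
    have hV : Nonempty V := by
      by_contra h
      rw [not_nonempty_iff] at h
      have hz : T.maxDegree = 0 := by
        simp only [SimpleGraph.maxDegree, Finset.univ_eq_empty, Finset.image_empty]
        rfl
      omega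
    obtain ⟨v, hv⟩ := T.exists_maximal_degree_vertex
    show T.maxDegree ≤ sInf {k : ℕ | ∃ c : Sym2 V → Fin k, IsStarEdgeColoring T c}
    rw [hv]
    have hinjOn : Set.InjOn (fun w => c s(v, w)) ↑(T.neighborFinset v) := by
      intro w1 hw1 w2 hw2 he
      by_contra hne
      exact hcp ((T.mem_neighborFinset v w1).mp (Finset.mem_coe.mp hw1))
        ((T.mem_neighborFinset v w2).mp (Finset.mem_coe.mp hw2)) hne he
    have hle := Finset.card_le_card_of_injOn (fun w => c s(v, w))
      (fun a _ => Finset.mem_univ _) hinjOn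
    rw [Finset.card_univ, Fintype.card_fin] at hle
    exact hle
  · exact Nat.sInf_le hmem
end
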